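/- The function f : N_{θ₀} → (0,∞) defined by the condition x/f(x) ∈ Cat₀ is continuous, and is smooth on N_{θ₀}; moreover each level set {f = c} for c > 0 equals c·Cat₀. -/

import Mathlib

open Real Set Pointwise Topology Filter

abbrev R3 := EuclideanSpace ℝ (Fin 3)

/-- The middle portion `Cat₀` of the standard vertical catenoid: the points with
`|x₃| < t₀`. -/
def Cat0 (t₀ : ℝ) : Set R3 :=
  {x | Real.cosh (x 2) ^ 2 = x 0 ^ 2 + x 1 ^ 2 ∧ |x 2| < t₀}

/-- The open solid double cone `N_{θ₀}` (with the origin removed), where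
`sin²θ₀ = t₀²/(t₀² + cosh²t₀)`. -/
def solidCone (t₀ : ℝ) : Set R3 :=
  {x | x ≠ 0 ∧ (x 2) ^ 2 < ‖x‖ ^ 2 * (t₀ ^ 2 / (t₀ ^ 2 + Real.cosh t₀ ^ 2))}

lemma aux1 {t₀ : ℝ} (ht₀ : 0 < t₀) (heq : Real.cosh t₀ = t₀ * Real.sinh t₀) {s : ℝ}
    (hs : |s| < t₀) : 0 < Real.cosh s - s * Real.sinh s := by
  have hanti : StrictAntiOn (fun u => Real.cosh u - u * Real.sinh u) (Icc 0 t₀) := by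
    apply strictAntiOn_of_deriv_neg (convex_Icc 0 t₀)
    · exact (Real.continuous_cosh.sub (continuous_id.mul Real.continuous_sinh)).continuousOn
    · intro u hu
      rw [interior_Icc] at hu
      have hD : HasDerivAt (fun u => Real.cosh u - u * Real.sinh u)
          (Real.sinh u - (1 * Real.sinh u + u * Real.cosh u)) u :=
        (Real.hasDerivAt_cosh u).sub ((hasDerivAt_id u).mul (Real.hasDerivAt_sinh u))
      rw [hD.deriv]
      have := Real.cosh_pos (x := u)
      nlinarith [hu.1]
  have habs : Real.cosh |s| - |s| * Real.sinh |s| = Real.cosh s - s * Real.sinh s := by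
    rcases abs_cases s with ⟨h1, _⟩ | ⟨h1, _⟩ <;> rw [h1] <;> simp [Real.cosh_neg, Real.sinh_neg]
  have h0 : (0:ℝ) < Real.cosh |s| - |s| * Real.sinh |s| := by
    have := hanti ⟨abs_nonneg s, hs.le⟩ ⟨le_trans (abs_nonneg s) hs.le, le_refl t₀⟩ hs
    simpa [heq] using this
  linarith [habs ▸ h0]

lemma aux3 {t₀ : ℝ} (ht₀ : 0 < t₀) (heq : Real.cosh t₀ = t₀ * Real.sinh t₀) {s : ℝ}
    (hs : |s| < t₀) : |s| * Real.cosh t₀ < t₀ * Real.cosh s := by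
  have hanti : StrictAntiOn (fun u => t₀ * Real.cosh u - u * Real.cosh t₀) (Icc 0 t₀) := by
    apply strictAntiOn_of_deriv_neg (convex_Icc 0 t₀)
    · exact ((continuous_const.mul Real.continuous_cosh).sub
        (continuous_id.mul continuous_const)).continuousOn
    · intro u hu
      rw [interior_Icc] at hu
      have hD : HasDerivAt (fun u => t₀ * Real.cosh u - u * Real.cosh t₀)
          (0 * Real.cosh u + t₀ * Real.sinh u - (1 * Real.cosh t₀ + u * 0)) u :=
        ((hasDerivAt_const u t₀).mul (Real.hasDerivAt_cosh u)).sub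
          ((hasDerivAt_id u).mul (hasDerivAt_const u (Real.cosh t₀)))
      rw [hD.deriv]
      have hsinh : Real.sinh u < Real.sinh t₀ := Real.sinh_lt_sinh.mpr hu.2
      nlinarith [hu.1]
  have h0 := hanti ⟨abs_nonneg s, hs.le⟩ ⟨le_trans (abs_nonneg s) hs.le, le_refl t₀⟩ hs
  simp only [Real.cosh_abs] at h0
  have : t₀ * Real.cosh t₀ - t₀ * Real.cosh t₀ = 0 := by ring
  rw [mul_comm t₀ (Real.cosh t₀)] at h0
  nlinarith [h0]

lemma psiMono {t₀ : ℝ} (ht₀ : 0 < t₀) (heq : Real.cosh t₀ = t₀ * Real.sinh t₀) (t : ℝ) :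
    StrictMonoOn (fun l => l * Real.cosh (t / l)) (Ioi (|t| / t₀)) := by
  apply strictMonoOn_of_deriv_pos (convex_Ioi _)
  · intro l hl
    have hl0 : 0 < l := lt_of_le_of_lt (div_nonneg (abs_nonneg t) ht₀.le) hl
    exact (continuousAt_id.mul (Real.continuous_cosh.continuousAt.comp
      (continuousAt_const.div continuousAt_id hl0.ne'))).continuousWithinAt
  · intro l hl
    rw [interior_Ioi] at hl
    have hl0 : 0 < l := lt_of_le_of_lt (div_nonneg (abs_nonneg t) ht₀.le) hl
    have hdiv : HasDerivAt (fun l : ℝ => t / l) ((0 * l - t * 1) / l ^ 2) l :=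
      (hasDerivAt_const l t).div (hasDerivAt_id l) hl0.ne'
    have hD : HasDerivAt (fun l => l * Real.cosh (t / l))
        (1 * Real.cosh (t / l) + l * (Real.sinh (t / l) * ((0 * l - t * 1) / l ^ 2))) l :=
      (hasDerivAt_id l).mul ((Real.hasDerivAt_cosh (t / l)).comp l hdiv)
    rw [hD.deriv]
    have hval : 1 * Real.cosh (t / l) + l * (Real.sinh (t / l) * ((0 * l - t * 1) / l ^ 2))
        = Real.cosh (t / l) - (t / l) * Real.sinh (t / l) := by
      field_simp
      ring
    rw [hval]
    apply aux1 ht₀ heq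
    rw [abs_div, abs_of_pos hl0, div_lt_iff₀ hl0]
    rw [mem_Ioi, div_lt_iff₀ ht₀] at hl
    linarith [hl]


lemma uniq2 {t₀ : ℝ} (ht₀ : 0 < t₀) (heq : Real.cosh t₀ = t₀ * Real.sinh t₀)
    {t r l m : ℝ} (hl : 0 < l) (hm : 0 < m)
    (h1 : l ^ 2 * Real.cosh (t / l) ^ 2 = r) (h2 : m ^ 2 * Real.cosh (t / m) ^ 2 = r)
    (hlt : |t| < l * t₀) (hmt : |t| < m * t₀) : l = m := by
  have hml : |t| / t₀ < l := by rw [div_lt_iff₀ ht₀]; linarith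
  have hmm : |t| / t₀ < m := by rw [div_lt_iff₀ ht₀]; linarith
  apply (psiMono ht₀ heq t).injOn hml hmm
  have ha : 0 < l * Real.cosh (t / l) := mul_pos hl (Real.cosh_pos _)
  have hb : 0 < m * Real.cosh (t / m) := mul_pos hm (Real.cosh_pos _)
  have hsq : (l * Real.cosh (t / l)) ^ 2 = (m * Real.cosh (t / m)) ^ 2 := by
    rw [mul_pow, mul_pow, h1, h2]
  show l * Real.cosh (t / l) = m * Real.cosh (t / m)
  nlinarith [ha, hb, hsq]

lemma bridge {t₀ l : ℝ} (ht₀ : 0 < t₀) (hl : 0 < l) (x : R3) :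
    l⁻¹ • x ∈ Cat0 t₀ ↔
      (l ^ 2 * Real.cosh (x 2 / l) ^ 2 = x 0 ^ 2 + x 1 ^ 2 ∧ |x 2| < l * t₀) := by
  have hl0 : l ≠ 0 := hl.ne'
  simp only [Cat0, mem_setOf_eq, PiLp.smul_apply, smul_eq_mul, inv_mul_eq_div]
  rw [abs_div, abs_of_pos hl, div_lt_iff₀ hl]
  constructor
  · rintro ⟨h1, h2⟩
    constructor
    · rw [h1]; field_simp
    · linarith
  · rintro ⟨h1, h2⟩
    constructor
    · have hc : Real.cosh (x 2 / l) ^ 2 = (x 0 ^ 2 + x 1 ^ 2) / l ^ 2 := by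
        rw [← h1]; field_simp
      rw [hc, div_pow, div_pow, ← add_div]
    · linarith

lemma uniqX {t₀ : ℝ} (ht₀ : 0 < t₀) (heq : Real.cosh t₀ = t₀ * Real.sinh t₀)
    {x : R3} {l m : ℝ} (hl : 0 < l) (hm : 0 < m)
    (h1 : l⁻¹ • x ∈ Cat0 t₀) (h2 : m⁻¹ • x ∈ Cat0 t₀) : l = m := by
  rw [bridge ht₀ hl] at h1
  rw [bridge ht₀ hm] at h2
  exact uniq2 ht₀ heq hl hm h1.1 h2.1 (by linarith [h1.2]) (by linarith [h2.2])

lemma norm_sq_R3 (x : R3) : ‖x‖ ^ 2 = x 0 ^ 2 + x 1 ^ 2 + x 2 ^ 2 := by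
  rw [EuclideanSpace.norm_eq, Real.sq_sqrt (by positivity)]
  simp [Fin.sum_univ_three, sq_abs]

lemma Cat0_subset_cone {t₀ : ℝ} (ht₀ : 0 < t₀) (heq : Real.cosh t₀ = t₀ * Real.sinh t₀)
    {y : R3} (hy : y ∈ Cat0 t₀) : y ∈ solidCone t₀ := by
  obtain ⟨h1, h2⟩ := hy
  have hcosh := Real.cosh_pos (x := y 2)
  have hconepos : (0:ℝ) < t₀ ^ 2 + Real.cosh t₀ ^ 2 := by positivity
  constructor
  · intro h0
    rw [h0] at h1
    simp at h1
  · rw [norm_sq_R3, mul_div_assoc', lt_div_iff₀ hconepos]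
    have key : |y 2| * Real.cosh t₀ < t₀ * Real.cosh (y 2) := aux3 ht₀ heq h2
    have key2 : (|y 2| * Real.cosh t₀) ^ 2 < (t₀ * Real.cosh (y 2)) ^ 2 := by
      apply pow_lt_pow_left₀ key (by positivity) (by norm_num)
    rw [mul_pow, mul_pow, sq_abs] at key2
    nlinarith [key2, h1, sq_nonneg (y 2)]

lemma smul_mem_cone {t₀ c : ℝ} (hc : 0 < c) {y : R3} (hy : y ∈ solidCone t₀) :
    c • y ∈ solidCone t₀ := by
  obtain ⟨h1, h2⟩ := hy
  refine ⟨smul_ne_zero hc.ne' h1, ?_⟩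
  have hcy : ∀ i, (c • y) i = c * y i := fun i => rfl
  rw [hcy, norm_smul, mul_pow, mul_pow]
  rw [Real.norm_eq_abs, sq_abs, mul_assoc]
  nlinarith [h2, sq_nonneg c, mul_lt_mul_of_pos_left h2 (pow_pos hc 2)]

variable {E : Type*} [NormedAddCommGroup E] [NormedSpace ℝ E]

lemma D_decomp (D : (E × ℝ) →L[ℝ] ℝ) (v : E × ℝ) :
    D v = D (v.1, 0) + v.2 * D (0, 1) := by
  have h : ((v.1, (0:ℝ)) : E × ℝ) + v.2 • ((0 : E), (1:ℝ)) = v := by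
    simp [Prod.ext_iff]
  conv_lhs => rw [← h]
  rw [map_add, map_smul, smul_eq_mul]

noncomputable def shearEquiv (D : (E × ℝ) →L[ℝ] ℝ) (hb : D (0, 1) ≠ 0) :
    (E × ℝ) ≃L[ℝ] (E × ℝ) :=
  { toFun := fun v => (v.1, D v)
    map_add' := fun u v => by simp [Prod.ext_iff]
    map_smul' := fun c v => by simp [Prod.ext_iff]
    invFun := fun w => (w.1, (D (0, 1))⁻¹ * (w.2 - D (w.1, 0)))
    left_inv := fun v => by
      refine Prod.ext rfl ?_
      show (D (0, 1))⁻¹ * (D v - D (v.1, 0)) = v.2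
      rw [D_decomp D v]
      field_simp
      ring
    right_inv := fun w => by
      refine Prod.ext rfl ?_
      show D (w.1, (D (0, 1))⁻¹ * (w.2 - D (w.1, 0))) = w.2
      rw [D_decomp D (w.1, (D (0, 1))⁻¹ * (w.2 - D (w.1, 0)))]
      show D (w.1, 0) + (D (0, 1))⁻¹ * (w.2 - D (w.1, 0)) * D (0, 1) = w.2
      field_simp
      ring
    continuous_toFun := continuous_fst.prodMk D.continuous
    continuous_invFun := continuous_fst.prodMk (continuous_const.mul
      (continuous_snd.sub (D.continuous.comp (continuous_fst.prodMk continuous_const)))) }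

lemma shearEquiv_coe (D : (E × ℝ) →L[ℝ] ℝ) (hb : D (0, 1) ≠ 0) (v : E × ℝ) :
    (shearEquiv D hb : (E × ℝ) →L[ℝ] (E × ℝ)) v = (v.1, D v) := rfl

noncomputable def Gfun : R3 × ℝ → ℝ :=
  fun p => p.2 ^ 2 * Real.cosh (p.1 2 / p.2) ^ 2 - p.1 0 ^ 2 - p.1 1 ^ 2

lemma Gfun_contDiffAt {p : R3 × ℝ} (hp : p.2 ≠ 0) : ContDiffAt ℝ (⊤ : ℕ∞) Gfun p := by
  have h0 : ContDiffAt ℝ (⊤ : ℕ∞) (fun q : R3 × ℝ => q.1 0) p := by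
    have hc : ContDiff ℝ (⊤ : ℕ∞) (fun y : R3 => y 0) := by fun_prop
    exact (hc.comp contDiff_fst).contDiffAt
  have h1 : ContDiffAt ℝ (⊤ : ℕ∞) (fun q : R3 × ℝ => q.1 1) p := by
    have hc : ContDiff ℝ (⊤ : ℕ∞) (fun y : R3 => y 1) := by fun_prop
    exact (hc.comp contDiff_fst).contDiffAt
  have h2 : ContDiffAt ℝ (⊤ : ℕ∞) (fun q : R3 × ℝ => q.1 2) p := by
    have hc : ContDiff ℝ (⊤ : ℕ∞) (fun y : R3 => y 2) := by fun_prop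
    exact (hc.comp contDiff_fst).contDiffAt
  have hdiv : ContDiffAt ℝ (⊤ : ℕ∞) (fun q : R3 × ℝ => q.1 2 / q.2) p :=
    h2.div contDiff_snd.contDiffAt hp
  have hcosh : ContDiffAt ℝ (⊤ : ℕ∞) (fun q : R3 × ℝ => Real.cosh (q.1 2 / q.2)) p :=
    Real.contDiff_cosh.contDiffAt.comp p hdiv
  exact (((contDiff_snd.contDiffAt.pow 2).mul (hcosh.pow 2)).sub (h0.pow 2)).sub (h1.pow 2)

lemma Gfun_hasDerivAt (x : R3) {l : ℝ} (hl : l ≠ 0) :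
    HasDerivAt (fun m => Gfun (x, m))
      (2 * l * Real.cosh (x 2 / l) ^ 2
        - 2 * Real.cosh (x 2 / l) * Real.sinh (x 2 / l) * x 2) l := by
  have hdiv : HasDerivAt (fun m : ℝ => x 2 / m) ((0 * l - x 2 * 1) / l ^ 2) l :=
    (hasDerivAt_const l (x 2)).div (hasDerivAt_id l) hl
  have hcosh := (Real.hasDerivAt_cosh (x 2 / l)).comp l hdiv
  have hsq := hcosh.pow 2
  have hmul := (hasDerivAt_pow 2 l).mul hsq
  have h := (hmul.sub_const (x 0 ^ 2)).sub_const (x 1 ^ 2)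
  have h' : HasDerivAt (fun m : ℝ => Gfun (x, m)) _ l := h
  convert h' using 1
  simp only [Function.comp_apply, Pi.pow_apply]
  field_simp
  ring

lemma key_smooth {t₀ : ℝ} (ht₀ : 0 < t₀) (heq : Real.cosh t₀ = t₀ * Real.sinh t₀)
    (f : R3 → ℝ) (hf : ∀ x ∈ solidCone t₀, 0 < f x ∧ (f x)⁻¹ • x ∈ Cat0 t₀)
    {x₀ : R3} (hx₀ : x₀ ∈ solidCone t₀) :
    ContDiffWithinAt ℝ (⊤ : ℕ∞) f (solidCone t₀) x₀ := by
  obtain ⟨hl₀, hmem⟩ := hf x₀ hx₀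
  set l₀ := f x₀ with hl₀def
  rw [bridge ht₀ hl₀] at hmem
  obtain ⟨heq0, habs0⟩ := hmem
  set p₀ : R3 × ℝ := (x₀, l₀) with hp₀
  have hl₀ne : l₀ ≠ 0 := hl₀.ne'
  have hG : ContDiffAt ℝ (⊤ : ℕ∞) Gfun p₀ := Gfun_contDiffAt hl₀ne
  have hGdiff : HasFDerivAt Gfun (fderiv ℝ Gfun p₀) p₀ :=
    (hG.differentiableAt (by simp)).hasFDerivAt
  set D := fderiv ℝ Gfun p₀ with hDdef
  have hγ : HasDerivAt (fun m : ℝ => ((x₀ : R3), m)) (((0 : R3), (1:ℝ))) l₀ :=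
    (hasDerivAt_const l₀ x₀).prodMk (hasDerivAt_id l₀)
  have hcomp : HasDerivAt (fun m : ℝ => Gfun (x₀, m)) (D ((0:R3), (1:ℝ))) l₀ :=
    hGdiff.comp_hasDerivAt l₀ hγ
  have hDb : D ((0:R3), (1:ℝ)) = 2 * l₀ * Real.cosh (x₀ 2 / l₀) ^ 2
      - 2 * Real.cosh (x₀ 2 / l₀) * Real.sinh (x₀ 2 / l₀) * x₀ 2 :=
    hcomp.unique (Gfun_hasDerivAt x₀ hl₀ne)
  have hsabs : |x₀ 2 / l₀| < t₀ := by
    rw [abs_div, abs_of_pos hl₀, div_lt_iff₀ hl₀]; linarith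
  have hkey := aux1 ht₀ heq hsabs
  have hbpos : 0 < D ((0:R3), (1:ℝ)) := by
    rw [hDb]
    have hc := Real.cosh_pos (x₀ 2 / l₀)
    have hfac : 2 * l₀ * Real.cosh (x₀ 2 / l₀) ^ 2
        - 2 * Real.cosh (x₀ 2 / l₀) * Real.sinh (x₀ 2 / l₀) * x₀ 2
        = 2 * l₀ * Real.cosh (x₀ 2 / l₀)
          * (Real.cosh (x₀ 2 / l₀) - x₀ 2 / l₀ * Real.sinh (x₀ 2 / l₀)) := by
      field_simp
    rw [hfac]
    have : 0 < 2 * l₀ * Real.cosh (x₀ 2 / l₀) := by positivity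
    exact mul_pos this hkey
  have hbne : D ((0:R3), (1:ℝ)) ≠ 0 := hbpos.ne'
  set L := shearEquiv D hbne with hLdef
  set Φ : R3 × ℝ → R3 × ℝ := fun p => (p.1, Gfun p) with hΦdef
  have hΦc : ContDiffAt ℝ (⊤ : ℕ∞) Φ p₀ := contDiff_fst.contDiffAt.prodMk hG
  have hLΦ : HasFDerivAt Φ (L : (R3 × ℝ) →L[ℝ] (R3 × ℝ)) p₀ := by
    have hcoe : (L : (R3 × ℝ) →L[ℝ] (R3 × ℝ))
        = (ContinuousLinearMap.fst ℝ R3 ℝ).prod D := ContinuousLinearMap.ext fun v => rfl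
    rw [hcoe]
    exact (ContinuousLinearMap.fst ℝ R3 ℝ).hasFDerivAt.prodMk hGdiff
  have hS : HasStrictFDerivAt Φ (L : (R3 × ℝ) →L[ℝ] (R3 × ℝ)) p₀ :=
    hΦc.hasStrictFDerivAt' hLΦ (by simp)
  set g : R3 × ℝ → R3 × ℝ := hS.localInverse Φ L p₀ with hgdef
  have hG0 : Gfun p₀ = 0 := by
    show l₀ ^ 2 * Real.cosh (x₀ 2 / l₀) ^ 2 - x₀ 0 ^ 2 - x₀ 1 ^ 2 = 0
    linarith
  have hΦp₀ : Φ p₀ = ((x₀ : R3), (0:ℝ)) := by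
    show (p₀.1, Gfun p₀) = (x₀, 0)
    rw [hG0]
  have hg : ContDiffAt ℝ (⊤ : ℕ∞) g (Φ p₀) := hΦc.to_localInverse hLΦ (by simp)
  have hgp : g (Φ p₀) = p₀ := hS.localInverse_apply_image
  set F : R3 → ℝ := fun x => (g (x, 0)).2 with hFdef
  have hmap : ContDiffAt ℝ (⊤ : ℕ∞) (fun x : R3 => ((x : R3), (0:ℝ))) x₀ :=
    (contDiff_id.prodMk contDiff_const).contDiffAt
  have hgF : ContDiffAt ℝ (⊤ : ℕ∞) (fun x : R3 => g (x, 0)) x₀ := by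
    rw [hΦp₀] at hg
    exact hg.comp x₀ hmap
  have hF : ContDiffAt ℝ (⊤ : ℕ∞) F x₀ := contDiff_snd.contDiffAt.comp x₀ hgF
  have hgx₀ : g ((x₀ : R3), (0:ℝ)) = p₀ := by rw [← hΦp₀]; exact hgp
  have hFx₀ : F x₀ = l₀ := by rw [hFdef]; show (g (x₀, 0)).2 = l₀; rw [hgx₀]
  have hright := hS.eventually_right_inverse
  rw [hΦp₀] at hright
  have hcont0 : Filter.Tendsto (fun x : R3 => ((x : R3), (0:ℝ))) (𝓝 x₀) (𝓝 (x₀, 0)) :=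
    hmap.continuousAt
  have hev1 : ∀ᶠ x in 𝓝 x₀, Φ (g (x, 0)) = (x, 0) := hcont0.eventually hright
  have hFc : Filter.Tendsto F (𝓝 x₀) (𝓝 (F x₀)) := hF.continuousAt
  have hev2 : ∀ᶠ x in 𝓝 x₀, 0 < F x := by
    apply hFc.eventually
    rw [hFx₀]
    exact eventually_gt_nhds hl₀
  have hx2c : ContinuousAt (fun x : R3 => |x 2|) x₀ := by
    have : Continuous (fun x : R3 => x 2) := (EuclideanSpace.proj (2 : Fin 3)).continuous
    exact (continuous_abs.comp this).continuousAt
  have hφc : Filter.Tendsto (fun x : R3 => F x * t₀ - |x 2|) (𝓝 x₀)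
      (𝓝 (F x₀ * t₀ - |x₀ 2|)) := (hF.continuousAt.mul continuousAt_const).sub hx2c
  have hev3 : ∀ᶠ x in 𝓝 x₀, 0 < F x * t₀ - |x 2| := by
    apply hφc.eventually
    rw [hFx₀]
    exact eventually_gt_nhds (by linarith)
  have hfeq : f =ᶠ[nhdsWithin x₀ (solidCone t₀)] F := by
    filter_upwards [mem_nhdsWithin_of_mem_nhds (hev1.and (hev2.and hev3)),
      self_mem_nhdsWithin] with x hx hxc
    obtain ⟨hx1, hx2, hx3⟩ := hx
    have hfst : (g (x, 0)).1 = x := congrArg Prod.fst hx1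
    have hsnd : Gfun (g (x, 0)) = 0 := congrArg Prod.snd hx1
    have hgx : g (x, 0) = ((x : R3), F x) := Prod.ext hfst rfl
    have hGxF : Gfun ((x : R3), F x) = 0 := hgx ▸ hsnd
    obtain ⟨hfx, hfxmem⟩ := hf x hxc
    have hFeq : (F x) ^ 2 * Real.cosh (x 2 / F x) ^ 2 = x 0 ^ 2 + x 1 ^ 2 := by
      have := hGxF
      simp only [Gfun] at this
      linarith
    have hFmem : (F x)⁻¹ • x ∈ Cat0 t₀ :=
      (bridge ht₀ hx2 x).mpr ⟨hFeq, by linarith⟩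
    exact uniqX ht₀ heq hfx hx2 hfxmem hFmem
  exact hF.contDiffWithinAt.congr_of_eventuallyEq hfeq hFx₀.symm

/-- Any function `f` on `N_{θ₀}` indexing the leaves of the catenoid foliation
(`f(x)⁻¹ • x ∈ Cat₀`, `f > 0`) is continuous, indeed smooth, on `N_{θ₀}`, and its level
set `{f = c}` is the dilated catenoid piece `c • Cat₀` for every `c > 0`. -/
theorem stmt6 (t₀ : ℝ) (ht₀ : 0 < t₀) (heq : Real.cosh t₀ = t₀ * Real.sinh t₀)
    (f : R3 → ℝ) (hf : ∀ x ∈ solidCone t₀, 0 < f x ∧ (f x)⁻¹ • x ∈ Cat0 t₀) :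
    ContinuousOn f (solidCone t₀) ∧ ContDiffOn ℝ (⊤ : ℕ∞) f (solidCone t₀) ∧
      ∀ c : ℝ, 0 < c → {x ∈ solidCone t₀ | f x = c} = c • Cat0 t₀ := by
  have hsmooth : ContDiffOn ℝ (⊤ : ℕ∞) f (solidCone t₀) := fun x hx => key_smooth ht₀ heq f hf hx
  refine ⟨hsmooth.continuousOn, hsmooth, ?_⟩
  intro c hc
  ext x
  simp only [mem_setOf_eq, mem_smul_set]
  constructor
  · rintro ⟨hx, hfx⟩
    refine ⟨(f x)⁻¹ • x, (hf x hx).2, ?_⟩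
    rw [← hfx]
    exact smul_inv_smul₀ (hf x hx).1.ne' x
  · rintro ⟨y, hy, rfl⟩
    have hyc : c • y ∈ solidCone t₀ := smul_mem_cone hc (Cat0_subset_cone ht₀ heq hy)
    obtain ⟨hp, hm⟩ := hf _ hyc
    refine ⟨hyc, ?_⟩
    have h2 : c⁻¹ • (c • y) ∈ Cat0 t₀ := by rw [inv_smul_smul₀ hc.ne']; exact hy
    exact uniqX ht₀ heq hp hc hm h2
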